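/- arXiv:1809.10578 — 3 statements merged into one kernel-verified Lean document; each statement's English description precedes it below -/
import Mathlib

section
/- Let G be a finite simple graph and let k ≥ 1. Let G'' be the graph obtained from the disjoint union of the complete graph K_{k+1} and G by adding two new vertices v₁ and v₂, each adjacent to every vertex of G (and to no vertex of K_{k+1}), together with the edge {v₁, v₂}. Then G'' contains a clique of size k + 2 if and only if G contains a clique of size k. -/
open SimpleGraph

/-- The graph `G''` obtained from the disjoint union of the complete graph `K_{k+1}` and `G`
by adding two new vertices `v₁`, `v₂` (the two elements of `Fin 2`), each adjacent to every
vertex of `G` and to no vertex of `K_{k+1}`, together with the edge `{v₁, v₂}`. -/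
def cliqueAddTwoVertices {V : Type} (G : SimpleGraph V) (k : ℕ) :
    SimpleGraph ((Fin (k + 1) ⊕ V) ⊕ Fin 2) :=
  (((⊤ : SimpleGraph (Fin (k + 1))) ⊕g G) ⊕g (⊤ : SimpleGraph (Fin 2))) ⊔
    SimpleGraph.fromEdgeSet
      {p : Sym2 ((Fin (k + 1) ⊕ V) ⊕ Fin 2) |
        ∃ (u : V) (i : Fin 2), p = s(Sum.inl (Sum.inr u), Sum.inr i)}

/-!
The vertices of `K_{k+1}` are adjacent only to each other, so a clique meeting them has at most
`k + 1` vertices. A `(k + 2)`-clique of `G''` therefore consists of a clique of `G` and at most the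
two new vertices, so `G` has at least `k` of them. Conversely, since `v₁` and `v₂` are adjacent to
each other and to all of `G`, adding them to a `k`-clique of `G` gives a `(k + 2)`-clique.
-/

open Finset

theorem SimpleGraph.IsClique.exists_isNClique_of_le_card {α : Type*} {G : SimpleGraph α}
    {s : Finset α} {n : ℕ} (hs : G.IsClique s) (hn : n ≤ #s) : ∃ t, G.IsNClique n t := by
  obtain ⟨t, hts, rfl⟩ := exists_subset_card_eq hn
  exact ⟨t, hs.subset hts, rfl⟩

namespace cliqueAddTwoVertices

variable {V : Type} {G : SimpleGraph V} {k : ℕ}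

@[simp]
theorem not_adj_inl_inl_inl_inr (i : Fin (k + 1)) (u : V) :
    ¬(cliqueAddTwoVertices G k).Adj (.inl (.inl i)) (.inl (.inr u)) := by
  simp [cliqueAddTwoVertices]

@[simp]
theorem not_adj_inl_inl_inr (i : Fin (k + 1)) (j : Fin 2) :
    ¬(cliqueAddTwoVertices G k).Adj (.inl (.inl i)) (.inr j) := by
  simp [cliqueAddTwoVertices]

@[simp]
theorem adj_inl_inr_inl_inr (u v : V) :
    (cliqueAddTwoVertices G k).Adj (.inl (.inr u)) (.inl (.inr v)) ↔ G.Adj u v := by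
  simp [cliqueAddTwoVertices]

@[simp]
theorem adj_inl_inr_inr (u : V) (i : Fin 2) :
    (cliqueAddTwoVertices G k).Adj (.inl (.inr u)) (.inr i) := by
  simp only [cliqueAddTwoVertices, sup_adj, fromEdgeSet_adj]
  exact Or.inr ⟨⟨u, i, rfl⟩, by simp⟩

@[simp]
theorem adj_inr_inr (i j : Fin 2) :
    (cliqueAddTwoVertices G k).Adj (.inr i) (.inr j) ↔ i ≠ j := by
  simp [cliqueAddTwoVertices]

theorem card_le_of_isClique_of_inl_inl_mem {s : Finset ((Fin (k + 1) ⊕ V) ⊕ Fin 2)}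
    (hs : (cliqueAddTwoVertices G k).IsClique s) {i : Fin (k + 1)} (hi : .inl (.inl i) ∈ s) :
    #s ≤ k + 1 := by
  have hsub : s ⊆ univ.map (Function.Embedding.inl.trans .inl) := by
    intro x hx
    obtain rfl | hne := eq_or_ne x (.inl (.inl i))
    · simp
    rcases x with (j | u) | j
    · simp
    · exact absurd (hs hi hx hne.symm) (not_adj_inl_inl_inl_inr i u)
    · exact absurd (hs hi hx hne.symm) (not_adj_inl_inl_inr i j)
  simpa using card_le_card hsub

end cliqueAddTwoVertices

theorem clique_add_two_vertices_iff_general {V : Type} (G : SimpleGraph V)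
    (k : ℕ) :
    (∃ s, (cliqueAddTwoVertices G k).IsNClique (k + 2) s) ↔
      ∃ s, G.IsNClique k s := by
  constructor
  · rintro ⟨s, hs⟩
    have hK : s.toLeft.toLeft = ∅ := by
      refine eq_empty_of_forall_notMem fun i hi ↦ ?_
      have := cliqueAddTwoVertices.card_le_of_isClique_of_inl_inl_mem hs.isClique
        (by simpa using hi)
      exact absurd hs.card_eq (by omega)
    have hG : G.IsClique (s.toLeft.toRight : Set V) := fun u hu v hv huv ↦
      (cliqueAddTwoVertices.adj_inl_inr_inl_inr u v).1
        (hs.isClique (by simpa using hu) (by simpa using hv) (by simpa using huv))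
    refine hG.exists_isNClique_of_le_card ?_
    have hcard : #s.toLeft.toLeft + #s.toLeft.toRight + #s.toRight = k + 2 := by
      rw [card_toLeft_add_card_toRight, card_toLeft_add_card_toRight, hs.card_eq]
    have : #s.toRight ≤ 2 := card_le_univ _
    rw [hK, card_empty] at hcard
    omega
  · rintro ⟨s, hs⟩
    refine ⟨(∅ : Finset (Fin (k + 1))).disjSum s |>.disjSum univ, ?_, by simp [hs.card_eq]⟩
    rintro ((i | u) | i) hx ((j | v) | j) hy hne <;> simp_all [adj_comm]
    exact hs.isClique hx hy hne

/-- `G''` contains a clique of size `k + 2` iff `G` contains a clique of size `k`. -/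
theorem clique_add_two_vertices_iff {V : Type} [Fintype V] (G : SimpleGraph V)
    (k : ℕ) (hk : 1 ≤ k) :
    (∃ s, (cliqueAddTwoVertices G k).IsNClique (k + 2) s) ↔
      ∃ s, G.IsNClique k s :=
  clique_add_two_vertices_iff_general G k
end

section
/- Let k ≥ 1 and let P be the path graph on k + 2 vertices. Then: (1) P contains a subtree with at least k internal vertices; (2) для every edge e of P, the graph P − e contains no subtree with at least k internal vertices; and (3) for every vertex v of P, the graph P − v contains no subtree with at least k internal vertices. In other words, P is an extremal (minimal) graph for the property of containing a subtree with at least k internal vertices. -/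
open SimpleGraph

/-- `G` contains a subtree (a connected acyclic subgraph, i.e. a tree) with at least `k`
internal vertices (vertices of degree at least 2 in the subtree). -/
def SimpleGraph.HasSubtreeWithInternal {V : Type u} (G : SimpleGraph V) (k : ℕ) : Prop :=
  ∃ H : G.Subgraph, H.coe.IsTree ∧
    k ≤ {v : V | v ∈ H.verts ∧ 2 ≤ (H.neighborSet v).ncard}.ncard

/-!
A finite tree with an internal vertex has at least two leaves: its degrees are all positive and
sum to `2n - 2`, so `∑ (deg v - 1) = n - 2`, and every internal vertex contributes at least one
to this sum. Hence a subtree with `k ≥ 1` internal vertices has at least `k + 2` vertices. The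
whole path on `k + 2` vertices is such a subtree, `P - v` has only `k + 1` vertices, and in
`P - e` such a subtree would have to span every vertex, making `P - e` connected, whereas every
edge of the tree `P` is a bridge.
-/

namespace SimpleGraph

variable {V : Type*} {G : SimpleGraph V}

def Subgraph.internalVerts (H : G.Subgraph) : Set V :=
  {v | v ∈ H.verts ∧ 2 ≤ (H.neighborSet v).ncard}

lemma Subgraph.ncard_coe_neighborSet (H : G.Subgraph) (x : H.verts) :
    (H.coe.neighborSet x).ncard = (H.neighborSet x).ncard :=
  Nat.card_congr (coeNeighborSetEquiv x)

lemma Subgraph.internalVerts_eq_image (H : G.Subgraph) :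
    H.internalVerts = Subtype.val '' {x : H.verts | 2 ≤ (H.coe.neighborSet x).ncard} := by
  ext v
  simp [internalVerts, ncard_coe_neighborSet, and_comm]

lemma IsBridge.not_connected_deleteEdges {e : Sym2 V} (he : G.IsBridge e) :
    ¬ (G.deleteEdges {e}).Connected := by
  induction e using Sym2.ind with
  | _ u w => exact fun hconn => isBridge_iff.mp he (hconn.preconnected u w)

theorem IsTree.ncard_internal_add_two_le [Finite V] [Nontrivial V] (hT : G.IsTree) :
    {v | 2 ≤ (G.neighborSet v).ncard}.ncard + 2 ≤ Nat.card V := by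
  classical
  have := Fintype.ofFinite V
  have hdeg (v : V) : (G.neighborSet v).ncard = G.degree v := by
    rw [← Nat.card_coe_set_eq, Nat.card_eq_fintype_card, card_neighborSet_eq_degree]
  simp_rw [hdeg]
  rw [Set.ncard_eq_toFinset_card', Set.toFinset_ofPred, Nat.card_eq_fintype_card]
  have hsum : ∑ v, G.degree v + 2 = 2 * Fintype.card V := by
    rw [sum_degrees_eq_twice_card_edges, ← hT.card_edgeFinset]
    ring
  have hshift : ∑ v, (G.degree v - 1) + Fintype.card V = ∑ v, G.degree v := by
    rw [← Finset.card_univ, Finset.card_eq_sum_ones, ← Finset.sum_add_distrib]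
    exact Finset.sum_congr rfl fun v _ =>
      Nat.sub_add_cancel (hT.connected.preconnected.degree_pos_of_nontrivial v)
  have hcount :
      (Finset.univ.filter fun v => 2 ≤ G.degree v).card ≤ ∑ v, (G.degree v - 1) := by
    rw [Finset.card_filter]
    exact Finset.sum_le_sum fun v _ => by split_ifs <;> omega
  omega

theorem Subgraph.ncard_internalVerts_add_two_le [Finite V] {H : G.Subgraph}
    (hH : H.coe.IsTree) (hne : H.internalVerts.Nonempty) :
    H.internalVerts.ncard + 2 ≤ H.verts.ncard := by
  rw [internalVerts_eq_image] at hne ⊢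
  obtain ⟨_, x, hx : 2 ≤ (H.coe.neighborSet x).ncard, rfl⟩ := hne
  obtain ⟨y, hxy⟩ := Set.nonempty_of_ncard_ne_zero (s := H.coe.neighborSet x) (by omega)
  have : Nontrivial H.verts := ⟨x, y, H.coe.ne_of_adj hxy⟩
  rw [Set.ncard_image_of_injective _ Subtype.val_injective, ← Nat.card_coe_set_eq]
  exact hH.ncard_internal_add_two_le

namespace HasSubtreeWithInternal

variable [Finite V] {k : ℕ}

theorem exists_connected_add_two_le (h : G.HasSubtreeWithInternal k) (hk : 1 ≤ k) :
    ∃ H : G.Subgraph, H.Connected ∧ k + 2 ≤ H.verts.ncard := by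
  obtain ⟨H, hH, hcard : k ≤ H.internalVerts.ncard⟩ := h
  have hne : H.internalVerts.Nonempty := Set.nonempty_of_ncard_ne_zero (by omega)
  exact ⟨H, ⟨hH.connected⟩,
    (Nat.add_le_add_right hcard 2).trans (Subgraph.ncard_internalVerts_add_two_le hH hne)⟩

theorem add_two_le_card (h : G.HasSubtreeWithInternal k) (hk : 1 ≤ k) :
    k + 2 ≤ Nat.card V := by
  obtain ⟨H, -, hcard⟩ := h.exists_connected_add_two_le hk
  exact hcard.trans (Set.ncard_le_card _)

theorem connected_of_card_le (h : G.HasSubtreeWithInternal k) (hk : 1 ≤ k)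
    (hV : Nat.card V ≤ k + 2) : G.Connected := by
  obtain ⟨H, hconn, hcard⟩ := h.exists_connected_add_two_le hk
  have hspan : H.verts = Set.univ := by
    by_contra hne
    have := Set.ncard_lt_card hne
    omega
  refine (connected_iff G).mpr ⟨fun u w => ?_, hconn.nonempty.to_subtype.map Subtype.val⟩
  have hu : u ∈ H.verts := hspan ▸ Set.mem_univ u
  have hw : w ∈ H.verts := hspan ▸ Set.mem_univ w
  exact (hconn.coe.preconnected ⟨u, hu⟩ ⟨w, hw⟩).map H.hom

end HasSubtreeWithInternal

section pathGraph

variable {n : ℕ} {u w a b : Fin n}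

lemma pathGraph_le_iff_of_adj_of_ne (huw : u.val + 1 = w.val) (hab : (pathGraph n).Adj a b)
    (hne : s(a, b) ≠ s(u, w)) : a.val ≤ u.val ↔ b.val ≤ u.val := by
  rw [pathGraph_adj] at hab
  have h₁ : ¬(a.val = u.val ∧ b.val = w.val) := fun ⟨ha, hb⟩ =>
    hne (by rw [Fin.ext ha, Fin.ext hb])
  have h₂ : ¬(b.val = u.val ∧ a.val = w.val) := fun ⟨hb, ha⟩ =>
    hne (by rw [Fin.ext ha, Fin.ext hb, Sym2.eq_swap])
  omega

lemma pathGraph_deleteEdges_le_iff_of_reachable (huw : u.val + 1 = w.val)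
    (h : ((pathGraph n).deleteEdges {s(u, w)}).Reachable a b) :
    a.val ≤ u.val ↔ b.val ≤ u.val := by
  obtain ⟨p⟩ := h
  induction p with
  | nil => rfl
  | cons hadj _ ih =>
    rw [deleteEdges_adj, Set.mem_singleton_iff] at hadj
    exact (pathGraph_le_iff_of_adj_of_ne huw hadj.1 hadj.2).trans ih

lemma pathGraph_isBridge_of_succ (huw : u.val + 1 = w.val) :
    (pathGraph n).IsBridge s(u, w) :=
  isBridge_iff.mpr fun hr => by
    have := pathGraph_deleteEdges_le_iff_of_reachable huw hr
    omega

theorem pathGraph_isAcyclic (n : ℕ) : (pathGraph n).IsAcyclic := by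
  refine isAcyclic_iff_forall_adj_isBridge.mpr fun v w hvw => ?_
  rcases pathGraph_adj.mp hvw with h | h
  · exact pathGraph_isBridge_of_succ h
  · exact Sym2.eq_swap ▸ pathGraph_isBridge_of_succ h

theorem pathGraph_isTree (n : ℕ) : (pathGraph (n + 1)).IsTree :=
  ⟨pathGraph_connected n, pathGraph_isAcyclic _⟩

theorem pathGraph_hasSubtreeWithInternal (k : ℕ) :
    (pathGraph (k + 2)).HasSubtreeWithInternal k := by
  refine ⟨⊤, Subgraph.topIso.isTree_iff.mpr (pathGraph_isTree _), ?_⟩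
  have hinner : Set.range (fun i : Fin k => i.castSucc.succ) ⊆
      (⊤ : (pathGraph (k + 2)).Subgraph).internalVerts := by
    rintro _ ⟨i, rfl⟩
    refine ⟨trivial,
      (Set.one_lt_ncard_iff).mpr ⟨i.castSucc.castSucc, i.succ.succ, ?_, ?_, ?_⟩⟩
    · simp [pathGraph_adj]
    · simp [pathGraph_adj]
    · exact Fin.ne_of_lt (by simp [Fin.lt_def])
  calc k = (Set.range (fun i : Fin k => i.castSucc.succ)).ncard := by
        rw [Set.ncard_range_of_injective (fun i j h => by simpa using h), Nat.card_fin]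
    _ ≤ _ := Set.ncard_le_ncard hinner

end pathGraph

end SimpleGraph

/-- The path graph `P` on `k + 2` vertices is extremal (minimal) for containing a subtree
with at least `k ≥ 1` internal vertices: `P` contains such a subtree, but no edge-deleted
graph `P - e` and no vertex-deleted graph `P - v` does. -/
theorem pathGraph_extremal_for_subtree_internal (k : ℕ) (hk : 1 ≤ k) :
    (pathGraph (k + 2)).HasSubtreeWithInternal k ∧
    (∀ e ∈ (pathGraph (k + 2)).edgeSet,
      ¬ ((pathGraph (k + 2)).deleteEdges {e}).HasSubtreeWithInternal k) ∧
    (∀ v : Fin (k + 2),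
      ¬ ((pathGraph (k + 2)).induce {v}ᶜ).HasSubtreeWithInternal k) := by
  refine ⟨pathGraph_hasSubtreeWithInternal k, fun e he h => ?_, fun v h => ?_⟩
  · have hbridge := isAcyclic_iff_forall_isBridge.mp (pathGraph_isAcyclic _) he
    exact hbridge.not_connected_deleteEdges (h.connected_of_card_le hk (by simp))
  · have hcard := h.add_two_le_card hk
    rw [Nat.card_eq_fintype_card, Fintype.card_compl_set, Set.card_singleton,
      Fintype.card_fin] at hcard
    omega
end

section
/- Let k be a natural number and let G be a finite simple graph with no isolated vertices that has more than 2k vertices and possesses a vertex cover of size at most k. Then G admits a crown decomposition (C, H, R) with |R| ≤ 2k. -/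
open SimpleGraph

/-- A set of vertices `S` is a vertex cover of `G` if it contains at least one endpoint of
every edge of `G`. -/
def SimpleGraph.IsVertexCover' {V : Type u} (G : SimpleGraph V) (S : Set V) : Prop :=
  ∀ ⦃u v : V⦄, G.Adj u v → u ∈ S ∨ v ∈ S

/-- `(C, H, R)` is a crown decomposition of `G` with saturating matching given by `f`:
`C`, `H`, `R` partition the vertex set, `C` is a nonempty independent set, there are no edges
between `C` and `R`, and `f` matches each vertex `h ∈ H` injectively to a distinct vertex
`f h ∈ C` along an edge of `G` (a matching of `G`-edges between `C` and `H` saturating `H`).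
-/
def SimpleGraph.IsCrownDecompositionWith {V : Type u} (G : SimpleGraph V)
    (C H R : Set V) (f : V → V) : Prop :=
  C.Nonempty ∧
  (∀ u ∈ C, ∀ v ∈ C, ¬ G.Adj u v) ∧
  (∀ u ∈ C, ∀ v ∈ R, ¬ G.Adj u v) ∧
  (∀ v : V, v ∈ C ∨ v ∈ H ∨ v ∈ R) ∧
  Disjoint C H ∧ Disjoint C R ∧ Disjoint H R ∧
  (∀ h ∈ H, f h ∈ C ∧ G.Adj h (f h)) ∧
  Set.InjOn f H

/-- `(C, H, R)` is a crown decomposition of `G`. -/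
def SimpleGraph.IsCrownDecomposition {V : Type u} (G : SimpleGraph V)
    (C H R : Set V) : Prop :=
  ∃ f : V → V, G.IsCrownDecompositionWith C H R f

/-!
Let `S` be a vertex cover with `|S| ≤ k`, so `Sᶜ` is independent. Choose `T ⊆ S` maximising the
deficiency `|T| - |N(T) \ S|`. Comparing with `T = ∅` gives `|N(T) \ S| ≤ |T|`, and comparing
with `T ∪ A` shows that every `A ⊆ S \ T` has at least `|A|` neighbours outside `S ∪ N(T)`:
Hall's condition for matching `H = S \ T` into `C = Sᶜ \ N(T)`. So `(C, H, R)` with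
`R = T ∪ (N(T) \ S)` is a crown decomposition with `|R| ≤ 2|T| ≤ 2k`, and `C` is nonempty
because `|V| > 2k ≥ |S| + |N(T) \ S|`.
-/

open Finset

theorem Finset.exists_injOn_of_card_le_card_biUnion {α β : Type*} [DecidableEq β] [Nonempty β]
    {s : Finset α} {t : α → Finset β} (hall : ∀ A ⊆ s, #A ≤ #(A.biUnion t)) :
    ∃ f : α → β, Set.InjOn f s ∧ ∀ a ∈ s, f a ∈ t a := by
  classical
  have hall' : ∀ A : Finset s, #A ≤ #(A.biUnion fun a => t a) := fun A => by
    simpa [card_image_of_injective _ Subtype.val_injective, image_biUnion] using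
      hall (A.image Subtype.val) (fun a ha => by aesop)
  obtain ⟨g, hg, hgt⟩ := (all_card_le_biUnion_card_iff_exists_injective _).mp hall'
  refine ⟨fun a => if ha : a ∈ s then g ⟨a, ha⟩ else Classical.arbitrary β, ?_, ?_⟩
  · intro a ha b hb hab
    simp only [dif_pos (mem_coe.mp ha), dif_pos (mem_coe.mp hb)] at hab
    exact congrArg Subtype.val (hg hab)
  · intro a ha
    simpa [dif_pos ha] using hgt ⟨a, ha⟩

namespace SimpleGraph

variable {V : Type*} [Fintype V] [DecidableEq V] (G : SimpleGraph V) [DecidableRel G.Adj]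

def outerNeighborFinset (S T : Finset V) : Finset V := T.biUnion (fun t => G.neighborFinset t) \ S

def deficiency (S T : Finset V) : ℤ := #T - #(G.outerNeighborFinset S T)

variable {G} {S T A : Finset V}

theorem mem_outerNeighborFinset {v : V} :
    v ∈ G.outerNeighborFinset S T ↔ v ∉ S ∧ ∃ t ∈ T, G.Adj t v := by
  simp [outerNeighborFinset, and_comm]

theorem outerNeighborFinset_union :
    G.outerNeighborFinset S (T ∪ A) = G.outerNeighborFinset S T ∪ G.outerNeighborFinset S A := by
  simp only [outerNeighborFinset, union_biUnion, union_sdiff_distrib]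

theorem card_outerNeighborFinset_le_of_forall_deficiency_le
    (hT : ∀ T' ⊆ S, G.deficiency S T' ≤ G.deficiency S T) :
    #(G.outerNeighborFinset S T) ≤ #T := by
  have hempty : G.outerNeighborFinset S ∅ = ∅ := by simp [outerNeighborFinset]
  have h := hT ∅ (empty_subset S)
  rw [deficiency, deficiency, hempty] at h
  simp only [card_empty, Nat.cast_zero, sub_zero] at h
  omega

theorem card_le_card_outerNeighborFinset_sdiff_of_forall_deficiency_le
    (hT : ∀ T' ⊆ S, G.deficiency S T' ≤ G.deficiency S T) (hTS : T ⊆ S) (hAS : A ⊆ S)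
    (hAT : Disjoint T A) :
    #A ≤ #(G.outerNeighborFinset S A \ G.outerNeighborFinset S T) := by
  have h := hT (T ∪ A) (union_subset hTS hAS)
  rw [deficiency, deficiency, outerNeighborFinset_union, card_union_of_disjoint hAT,
    union_comm, ← card_sdiff_add_card] at h
  omega

theorem isCrownDecomposition_of_forall_deficiency_le (hS : G.IsVertexCover' S) (hTS : T ⊆ S)
    (hT : ∀ T' ⊆ S, G.deficiency S T' ≤ G.deficiency S T)
    (hC : (Sᶜ \ G.outerNeighborFinset S T).Nonempty) :
    G.IsCrownDecomposition ↑(Sᶜ \ G.outerNeighborFinset S T) ↑(S \ T)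
      ↑(T ∪ G.outerNeighborFinset S T) := by
  set N := G.outerNeighborFinset S T
  have hN : ∀ v, v ∈ N ↔ v ∉ S ∧ ∃ t ∈ T, G.Adj t v := fun v => mem_outerNeighborFinset
  have hall : ∀ A ⊆ S \ T, #A ≤ #(A.biUnion fun h => G.neighborFinset h ∩ (Sᶜ \ N)) := by
    intro A hA
    have hbiUnion : A.biUnion (fun h => G.neighborFinset h ∩ (Sᶜ \ N)) =
        G.outerNeighborFinset S A \ N := by
      ext v
      simp only [mem_biUnion, mem_inter, mem_neighborFinset, mem_sdiff, mem_compl,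
        mem_outerNeighborFinset]
      tauto
    rw [hbiUnion]
    exact card_le_card_outerNeighborFinset_sdiff_of_forall_deficiency_le hT hTS
      (hA.trans sdiff_subset) (disjoint_of_subset_right hA disjoint_sdiff)
  have : Nonempty V := ⟨hC.choose⟩
  obtain ⟨f, hf_inj, hf⟩ := exists_injOn_of_card_le_card_biUnion hall
  refine ⟨f, coe_nonempty.mpr hC, ?_, ?_, ?_, ?_, ?_, ?_, ?_, hf_inj⟩
  · intro u hu v hv huv
    simp only [mem_coe, mem_sdiff, mem_compl] at hu hv
    exact (hS huv).elim hu.1 hv.1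
  · intro u hu v hv huv
    simp only [mem_coe, mem_sdiff, mem_compl, mem_union, hN] at hu hv
    rcases hv with hvT | ⟨hvS, -⟩
    · exact hu.2 ⟨hu.1, v, hvT, huv.symm⟩
    · exact (hS huv).elim hu.1 hvS
  · intro v
    simp only [mem_coe, mem_sdiff, mem_compl, mem_union]
    tauto
  · simp only [Set.disjoint_left, mem_coe, mem_sdiff, mem_compl]
    tauto
  · simp only [Set.disjoint_left, mem_coe, mem_sdiff, mem_compl, mem_union]
    exact fun v hv hvR => hvR.elim (fun hvT => hv.1 (hTS hvT)) hv.2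
  · simp only [Set.disjoint_left, mem_coe, mem_sdiff, mem_union, hN]
    tauto
  · intro h hh
    have hfh := hf h hh
    rw [mem_inter, mem_neighborFinset] at hfh
    exact ⟨hfh.2, hfh.1⟩

theorem exists_isCrownDecomposition_of_isVertexCover (hS : G.IsVertexCover' S)
    (hcard : 2 * #S < Fintype.card V) :
    ∃ C H R : Set V, G.IsCrownDecomposition C H R ∧ R.ncard ≤ 2 * #S := by
  obtain ⟨T, hTS, hT⟩ := exists_max_image S.powerset (G.deficiency S) ⟨∅, empty_mem_powerset S⟩
  replace hTS := mem_powerset.mp hTS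
  replace hT : ∀ T' ⊆ S, G.deficiency S T' ≤ G.deficiency S T :=
    fun T' hT' => hT T' (mem_powerset.mpr hT')
  have hNT := card_outerNeighborFinset_le_of_forall_deficiency_le hT
  have hTS_card := card_le_card hTS
  refine ⟨_, _, _, isCrownDecomposition_of_forall_deficiency_le hS hTS hT ?_, ?_⟩
  · have hC_card := le_card_sdiff (G.outerNeighborFinset S T) Sᶜ
    rw [card_compl] at hC_card
    exact card_pos.mp (by omega)
  · calc (↑(T ∪ G.outerNeighborFinset S T) : Set V).ncard
        = #(T ∪ G.outerNeighborFinset S T) := Set.ncard_coe_finset _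
      _ ≤ #T + #(G.outerNeighborFinset S T) := card_union_le _ _
      _ ≤ 2 * #S := by omega

end SimpleGraph

theorem crown_decomposition_of_small_vertexCover_general {V : Type} [Fintype V]
    (G : SimpleGraph V) (k : ℕ)
    (hcard : 2 * k < Fintype.card V)
    (hvc : ∃ S : Set V, G.IsVertexCover' S ∧ S.ncard ≤ k) :
    ∃ C H R : Set V, G.IsCrownDecomposition C H R ∧ R.ncard ≤ 2 * k := by
  classical
  obtain ⟨S, hS, hSk⟩ := hvc
  rw [Set.ncard_eq_toFinset_card'] at hSk
  obtain ⟨C, H, R, hCHR, hR⟩ := G.exists_isCrownDecomposition_of_isVertexCover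
    (S := S.toFinset) (by rwa [Set.coe_toFinset]) (by omega)
  exact ⟨C, H, R, hCHR, by omega⟩

/-- A finite simple graph with no isolated vertices, more than `2k` vertices, and a vertex
cover of size at most `k` admits a crown decomposition `(C, H, R)` with `|R| ≤ 2k`. -/
theorem crown_decomposition_of_small_vertexCover {V : Type} [Fintype V]
    (G : SimpleGraph V) (k : ℕ)
    (hiso : ∀ v : V, ∃ u : V, G.Adj v u)
    (hcard : 2 * k < Fintype.card V)
    (hvc : ∃ S : Set V, G.IsVertexCover' S ∧ S.ncard ≤ k) :
    ∃ C H R : Set V, G.IsCrownDecomposition C H R ∧ R.ncard ≤ 2 * k :=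
  crown_decomposition_of_small_vertexCover_general G k hcard hvc
end
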